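/- Define Q_{uvst} := ∂C_{ust}/∂y^v − 2 g_{ab} Γ^a_{vu} Γ^b_{st} on an open set U ⊆ ℝ^m where g_{uv} = ∂²φ/∂y^u∂y^v is invertible, C_{uvw} = ∂³φ/∂y^u∂y^v∂y^w, Γ^a_{uv} = (1/2)g^{aw}C_{wuv}. Then Q has the symmetries Q_{uvst} = Q_{uvts} = Q_{stuv} = Q_{vust} for all indices. -/

import Mathlib

/-- Partial derivative of `f` at `x` in the `i`-th coordinate direction. -/
noncomputable def pd {m : ℕ} (i : Fin m) (f : (Fin m → ℝ) → ℝ) (x : Fin m → ℝ) : ℝ :=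
  fderiv ℝ f x (Pi.single i 1)

/-- Hessian metric components `g u v = ∂_u ∂_v φ`. -/
noncomputable def hess {m : ℕ} (φ : (Fin m → ℝ) → ℝ) (u v : Fin m) (x : Fin m → ℝ) : ℝ :=
  pd u (fun y => pd v φ y) x

/-- Cartan tensor `C u v w = ∂_u ∂_v ∂_w φ`. -/
noncomputable def cartan {m : ℕ} (φ : (Fin m → ℝ) → ℝ) (u v w : Fin m) (x : Fin m → ℝ) : ℝ :=
  pd u (fun y => pd v (fun z => pd w φ z) y) x

/-- Christoffel symbols `Γ^a_{uv} = (1/2) g^{aw} C_{wuv}` of the Hessian metric. -/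
noncomputable def christoffel {m : ℕ} (φ : (Fin m → ℝ) → ℝ)
    (ginv : Fin m → Fin m → (Fin m → ℝ) → ℝ) (a u v : Fin m) (x : Fin m → ℝ) : ℝ :=
  (1 / 2) * ∑ w, ginv a w x * cartan φ w u v x

/-- Hessian curvature tensor `Q_{uvst} = ∂_v C_{ust} − 2 g_{ab} Γ^a_{vu} Γ^b_{st}`. -/
noncomputable def hessCurv {m : ℕ} (φ : (Fin m → ℝ) → ℝ)
    (ginv : Fin m → Fin m → (Fin m → ℝ) → ℝ) (u v s t : Fin m) (x : Fin m → ℝ) : ℝ :=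
  pd v (cartan φ u s t) x
    - 2 * ∑ a, ∑ b, hess φ a b x * christoffel φ ginv a v u x * christoffel φ ginv b s t x

/-- Covariant Riemann curvature tensor
`R_{uvst} = g_{ua}(∂_t Γ^a_{sv} − ∂_s Γ^a_{tv} + Γ^a_{tb} Γ^b_{sv} − Γ^a_{sb} Γ^b_{tv})`. -/
noncomputable def riemCurv {m : ℕ} (φ : (Fin m → ℝ) → ℝ)
    (ginv : Fin m → Fin m → (Fin m → ℝ) → ℝ) (u v s t : Fin m) (x : Fin m → ℝ) : ℝ :=
  ∑ a, hess φ u a x *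
    (pd t (christoffel φ ginv a s v) x - pd s (christoffel φ ginv a t v) x
      + ∑ b, (christoffel φ ginv a t b x * christoffel φ ginv b s v x
              - christoffel φ ginv a s b x * christoffel φ ginv b t v x))

/- ### Auxiliary lemmas -/

theorem pd_contDiffOn {m : ℕ} {U : Set (Fin m → ℝ)} (hU : IsOpen U)
    {f : (Fin m → ℝ) → ℝ} (hf : ContDiffOn ℝ (⊤ : ℕ∞) f U) (i : Fin m) :
    ContDiffOn ℝ (⊤ : ℕ∞) (pd i f) U :=
  (hf.fderiv_of_isOpen hU (by simp)).clm_apply contDiffOn_const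

theorem pd_congr {m : ℕ} {U : Set (Fin m → ℝ)} (hU : IsOpen U) {f g : (Fin m → ℝ) → ℝ}
    (h : ∀ y ∈ U, f y = g y) {x} (hx : x ∈ U) (i : Fin m) : pd i f x = pd i g x := by
  unfold pd
  rw [Filter.EventuallyEq.fderiv_eq (Filter.eventuallyEq_of_mem (hU.mem_nhds hx) h)]

theorem pd_swap {m : ℕ} {U : Set (Fin m → ℝ)} (hU : IsOpen U) {f : (Fin m → ℝ) → ℝ}
    (hf : ContDiffOn ℝ (⊤ : ℕ∞) f U) (a b : Fin m) {x} (hx : x ∈ U) :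
    pd a (pd b f) x = pd b (pd a f) x := by
  have hat : ContDiffAt ℝ (⊤ : ℕ∞) f x := hf.contDiffAt (hU.mem_nhds hx)
  have hsymm := hat.isSymmSndFDerivAt (by rw [minSmoothness_of_isRCLikeNormedField]; exact WithTop.coe_le_coe.mpr le_top)
  have hdiff : DifferentiableAt ℝ (fderiv ℝ f) x :=
    (hat.fderiv_right (m := 1) (WithTop.coe_le_coe.mpr le_top)).differentiableAt one_ne_zero
  have key : ∀ v w : Fin m → ℝ,
      fderiv ℝ (fun y => fderiv ℝ f y w) x v = fderiv ℝ (fderiv ℝ f) x v w := by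
    intro v w
    have := fderiv_clm_apply (c := fderiv ℝ f) (u := fun _ => w) hdiff
      (differentiableAt_const w)
    simp [this]
  show fderiv ℝ (fun y => fderiv ℝ f y (Pi.single b 1)) x (Pi.single a 1) =
    fderiv ℝ (fun y => fderiv ℝ f y (Pi.single a 1)) x (Pi.single b 1)
  rw [key, key, hsymm]

theorem hess_symm {m : ℕ} {U : Set (Fin m → ℝ)} (hU : IsOpen U) {φ : (Fin m → ℝ) → ℝ}
    (hφ : ContDiffOn ℝ (⊤ : ℕ∞) φ U) (a b : Fin m) {x} (hx : x ∈ U) :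
    hess φ a b x = hess φ b a x :=
  pd_swap hU hφ a b hx

theorem cartan_symm23 {m : ℕ} {U : Set (Fin m → ℝ)} (hU : IsOpen U) {φ : (Fin m → ℝ) → ℝ}
    (hφ : ContDiffOn ℝ (⊤ : ℕ∞) φ U) (w a b : Fin m) {x} (hx : x ∈ U) :
    cartan φ w a b x = cartan φ w b a x :=
  pd_congr hU (fun y hy => pd_swap hU hφ a b hy) hx w

theorem cartan_symm12 {m : ℕ} {U : Set (Fin m → ℝ)} (hU : IsOpen U) {φ : (Fin m → ℝ) → ℝ}
    (hφ : ContDiffOn ℝ (⊤ : ℕ∞) φ U) (a b c : Fin m) {x} (hx : x ∈ U) :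
    cartan φ a b c x = cartan φ b a c x :=
  pd_swap hU (pd_contDiffOn hU hφ c) a b hx

/-- Fourth derivatives: swap first two indices. -/
theorem d4_swap12 {m : ℕ} {U : Set (Fin m → ℝ)} (hU : IsOpen U) {φ : (Fin m → ℝ) → ℝ}
    (hφ : ContDiffOn ℝ (⊤ : ℕ∞) φ U) (a b c d : Fin m) {x} (hx : x ∈ U) :
    pd a (cartan φ b c d) x = pd b (cartan φ a c d) x :=
  pd_swap hU (pd_contDiffOn hU (pd_contDiffOn hU hφ d) c) a b hx

/-- Fourth derivatives: swap middle two indices. -/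
theorem d4_swap23 {m : ℕ} {U : Set (Fin m → ℝ)} (hU : IsOpen U) {φ : (Fin m → ℝ) → ℝ}
    (hφ : ContDiffOn ℝ (⊤ : ℕ∞) φ U) (a b c d : Fin m) {x} (hx : x ∈ U) :
    pd a (cartan φ b c d) x = pd a (cartan φ c b d) x :=
  pd_congr hU (fun y hy => cartan_symm12 hU hφ b c d hy) hx a

/-- Fourth derivatives: swap last two indices. -/
theorem d4_swap34 {m : ℕ} {U : Set (Fin m → ℝ)} (hU : IsOpen U) {φ : (Fin m → ℝ) → ℝ}
    (hφ : ContDiffOn ℝ (⊤ : ℕ∞) φ U) (a b c d : Fin m) {x} (hx : x ∈ U) :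
    pd a (cartan φ b c d) x = pd a (cartan φ b d c) x :=
  pd_congr hU (fun y hy => cartan_symm23 hU hφ b c d hy) hx a

/-- the Hessian curvature `Q_{uvst} = ∂_v C_{ust} − 2 g_{ab} Γ^a_{vu} Γ^b_{st}`
has the symmetries `Q_{uvst} = Q_{uvts} = Q_{stuv} = Q_{vust}`. -/
theorem hessian_curvature_symmetries
    {m : ℕ} (U : Set (Fin m → ℝ)) (hU : IsOpen U)
    (φ : (Fin m → ℝ) → ℝ) (hφ : ContDiffOn ℝ (⊤ : ℕ∞) φ U)
    (ginv : Fin m → Fin m → (Fin m → ℝ) → ℝ)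
    (hginvsmooth : ∀ u v, ContDiffOn ℝ (⊤ : ℕ∞) (ginv u v) U)
    (hginv : ∀ x ∈ U, ∀ u v, ∑ w, hess φ u w x * ginv w v x = if u = v then (1 : ℝ) else 0) :
    ∀ x ∈ U, ∀ u v s t,
      hessCurv φ ginv u v s t x = hessCurv φ ginv u v t s x ∧
      hessCurv φ ginv u v s t x = hessCurv φ ginv s t u v x ∧
      hessCurv φ ginv u v s t x = hessCurv φ ginv v u s t x := by
  intro x hx
  -- symmetry of the inverse metric
  have hginv_symm : ∀ w z, ginv w z x = ginv z w x := by
    intro w z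
    set G : Matrix (Fin m) (Fin m) ℝ := Matrix.of fun a b => hess φ a b x with hG
    set H : Matrix (Fin m) (Fin m) ℝ := Matrix.of fun a b => ginv a b x with hH
    have hGH : G * H = 1 := by
      ext a b
      simp only [Matrix.mul_apply, hG, hH, Matrix.of_apply, Matrix.one_apply]
      exact hginv x hx a b
    have hHG : H * G = 1 := mul_eq_one_comm.mp hGH
    have hGsymm : Matrix.transpose G = G := by
      ext a b
      simp only [Matrix.transpose_apply, hG, Matrix.of_apply]
      exact hess_symm hU hφ b a hx
    have hHT : Matrix.transpose H * G = 1 := by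
      have := congrArg Matrix.transpose hGH
      rwa [Matrix.transpose_mul, hGsymm, Matrix.transpose_one] at this
    have : Matrix.transpose H = H := by
      calc Matrix.transpose H = Matrix.transpose H * 1 := by rw [Matrix.mul_one]
        _ = Matrix.transpose H * (G * H) := by rw [hGH]
        _ = (Matrix.transpose H * G) * H := by rw [Matrix.mul_assoc]
        _ = H := by rw [hHT, Matrix.one_mul]
    have := congrFun (congrFun this w) z
    simpa [hH] using this.symm
  -- contraction: ∑ₐ g_{ab} Γ^a_{vu} = (1/2) C_{bvu}
  have contract : ∀ b v u : Fin m,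
      (∑ a, hess φ a b x * christoffel φ ginv a v u x) = (1 / 2) * cartan φ b v u x := by
    intro b v u
    simp only [christoffel]
    have step1 : (∑ a, hess φ a b x * ((1 / 2) * ∑ w, ginv a w x * cartan φ w v u x))
        = ∑ a, ∑ w, (1 / 2) * (hess φ b a x * ginv a w x) * cartan φ w v u x := by
      refine Finset.sum_congr rfl fun a _ => ?_
      rw [Finset.mul_sum, Finset.mul_sum, hess_symm hU hφ a b hx]
      exact Finset.sum_congr rfl fun w _ => by ring
    rw [step1, Finset.sum_comm]
    have step2 : ∀ w : Fin m,
        (∑ a, (1 / 2) * (hess φ b a x * ginv a w x) * cartan φ w v u x)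
        = (1 / 2) * (if b = w then (1 : ℝ) else 0) * cartan φ w v u x := by
      intro w
      rw [← hginv x hx b w, Finset.mul_sum, Finset.sum_mul]
      try exact Finset.sum_congr rfl fun a _ => by ring
    simp only [step2, mul_ite, mul_one, mul_zero, ite_mul, zero_mul]
    rw [Finset.sum_ite_eq]
    simp
  -- the quadratic term in `hessCurv`
  have Tval : ∀ v u s t : Fin m,
      (2 * ∑ a, ∑ b, hess φ a b x * christoffel φ ginv a v u x * christoffel φ ginv b s t x)
      = (1 / 2) * ∑ w, ∑ z, ginv w z x * cartan φ w v u x * cartan φ z s t x := by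
    intro v u s t
    have : (∑ a, ∑ b, hess φ a b x * christoffel φ ginv a v u x * christoffel φ ginv b s t x)
        = ∑ b, (∑ a, hess φ a b x * christoffel φ ginv a v u x) * christoffel φ ginv b s t x := by
      rw [Finset.sum_comm]
      exact Finset.sum_congr rfl fun b _ => by rw [Finset.sum_mul]
    rw [this]
    have : (∑ b, (∑ a, hess φ a b x * christoffel φ ginv a v u x) * christoffel φ ginv b s t x)
        = ∑ b, ∑ z, (1 / 4) * (ginv b z x * cartan φ b v u x * cartan φ z s t x) := by
      refine Finset.sum_congr rfl fun b _ => ?_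
      rw [contract b v u]
      simp only [christoffel]
      rw [Finset.mul_sum, Finset.mul_sum]
      exact Finset.sum_congr rfl fun z _ => by ring
    rw [this, Finset.mul_sum, Finset.mul_sum]
    refine Finset.sum_congr rfl fun b _ => ?_
    rw [Finset.mul_sum, Finset.mul_sum]
    exact Finset.sum_congr rfl fun z _ => by ring
  intro u v s t
  simp only [hessCurv, Tval]
  refine ⟨?_, ?_, ?_⟩
  · -- Q_{uvst} = Q_{uvts}
    have h1 : pd v (cartan φ u s t) x = pd v (cartan φ u t s) x := d4_swap34 hU hφ v u s t hx
    have h2 : ∀ z : Fin m, cartan φ z s t x = cartan φ z t s x :=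
      fun z => cartan_symm23 hU hφ z s t hx
    rw [h1]
    congr 1
    refine congrArg _ (Finset.sum_congr rfl fun w _ => Finset.sum_congr rfl fun z _ => ?_)
    rw [h2 z]
  · -- Q_{uvst} = Q_{stuv}
    have h1 : pd v (cartan φ u s t) x = pd t (cartan φ s u v) x := by
      calc pd v (cartan φ u s t) x = pd u (cartan φ v s t) x := d4_swap12 hU hφ v u s t hx
        _ = pd u (cartan φ s v t) x := d4_swap23 hU hφ u v s t hx
        _ = pd s (cartan φ u v t) x := d4_swap12 hU hφ u s v t hx
        _ = pd s (cartan φ u t v) x := d4_swap34 hU hφ s u v t hx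
        _ = pd s (cartan φ t u v) x := d4_swap23 hU hφ s u t v hx
        _ = pd t (cartan φ s u v) x := d4_swap12 hU hφ s t u v hx
    rw [h1]
    congr 1
    refine congrArg _ ?_
    rw [Finset.sum_comm]
    refine Finset.sum_congr rfl fun z _ => Finset.sum_congr rfl fun w _ => ?_
    rw [hginv_symm w z, cartan_symm23 hU hφ w v u hx, cartan_symm23 hU hφ z s t hx]
    ring
  · -- Q_{uvst} = Q_{vust}
    have h1 : pd v (cartan φ u s t) x = pd u (cartan φ v s t) x := d4_swap12 hU hφ v u s t hx
    rw [h1]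
    congr 1
    refine congrArg _ (Finset.sum_congr rfl fun w _ => Finset.sum_congr rfl fun z _ => ?_)
    rw [cartan_symm23 hU hφ w v u hx]
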